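/- arXiv:1601.00108 — 10 statements merged into one kernel-verified Lean document; each statement's English description precedes it below -/
import Mathlib

section
/- Let S and R be finite sets, let N be a real S×R matrix with column space W = range(N), let c̄ ∈ ℝ^S be strictly positive, and let γ ∈ ℝ^S be strictly positive. Then there exists exactly one strictly positive vector ĉ ∈ ℝ^S such that ĉ − γ ∈ W and Nᵀ applied to the vector (log(ĉ_s/c̄_s))_{s∈S} is zero. (Existence and uniqueness of the detailed-balance stationary state in each stoichiometric simplex.) -/
open Matrix Filter Real

/-!
Write `u = log (ĉ / c̄)`. The conditions on `ĉ = c̄ eᵘ` say that `u ∈ ker Nᵀ` and that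
`c̄ eᵘ - γ`, the gradient of `Φ u = ∑ₛ (c̄ₛ e^{uₛ} - γₛ uₛ)`, lies in `range N = (ker Nᵀ)ᗮ`:
`u` is a critical point of `Φ` on `ker Nᵀ`. As `c̄, γ > 0`, every summand of `Φ` tends to `+∞`
when `|uₛ| → ∞`, so `Φ` is coercive and attains its minimum on the closed subspace `ker Nᵀ`.

For uniqueness, two solutions `c, c'` satisfy `c - c' ∈ range N` and `log c - log c' ∈ ker Nᵀ`,
so `∑ₛ (cₛ - c'ₛ) (log cₛ - log c'ₛ) = 0`; by monotonicity of `log` every summand is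
nonnegative, and it vanishes only when `cₛ = c'ₛ`.
-/

namespace Matrix

variable {K m n : Type*} [Field K] [Fintype m] [Fintype n]

theorem mem_range_mulVecLin_iff_forall_dotProduct_eq_zero (A : Matrix m n K) (x : m → K) :
    x ∈ LinearMap.range A.mulVecLin ↔ ∀ w, Aᵀ *ᵥ w = 0 → x ⬝ᵥ w = 0 := by
  classical
  constructor
  · rintro ⟨y, rfl⟩ w hw
    rw [mulVecLin_apply, dotProduct_comm, dotProduct_mulVec, ← mulVec_transpose, hw,
      zero_dotProduct]
  · intro h
    by_contra hx
    obtain ⟨f, hfx, hf⟩ := Submodule.exists_dual_map_eq_bot_of_notMem hx inferInstance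
    set w := (dotProductEquiv K m).symm f
    have hfw : ∀ v, f v = w ⬝ᵥ v := fun v => by
      rw [← dotProductEquiv_apply_apply, LinearEquiv.apply_symm_apply]
    have hw : Aᵀ *ᵥ w = 0 := by
      funext j
      have hj : f (A *ᵥ Pi.single j 1) = 0 := by
        rw [← Submodule.mem_bot K, ← hf]
        exact Submodule.mem_map_of_mem ⟨_, rfl⟩
      rwa [hfw, mulVec_single_one, dotProduct_comm] at hj
    exact hfx (by rw [hfw, dotProduct_comm, h w hw])

end Matrix

theorem Real.sub_mul_log_sub_log_pos {a b : ℝ} (ha : 0 < a) (hb : 0 < b) (hab : a ≠ b) :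
    0 < (a - b) * (log a - log b) := by
  rcases hab.lt_or_gt with hlt | hgt
  · exact mul_pos_of_neg_of_neg (sub_neg.2 hlt) (sub_neg.2 (log_lt_log ha hlt))
  · exact mul_pos (sub_pos.2 hgt) (sub_pos.2 (log_lt_log hb hgt))

theorem eq_of_sub_dotProduct_log_sub_log_eq_zero {ι : Type*} [Fintype ι] {x y : ι → ℝ}
    (hx : ∀ i, 0 < x i) (hy : ∀ i, 0 < y i)
    (h : (x - y) ⬝ᵥ (fun i => log (x i) - log (y i)) = 0) : x = y := by
  have hterm : ∀ i, 0 ≤ (x i - y i) * (log (x i) - log (y i)) := fun i => by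
    rcases eq_or_ne (x i) (y i) with hxy | hxy
    · simp [hxy]
    · exact (sub_mul_log_sub_log_pos (hx i) (hy i) hxy).le
  have hzero := (Finset.sum_eq_zero_iff_of_nonneg fun i _ => hterm i).1 h
  funext i
  by_contra hxy
  exact (sub_mul_log_sub_log_pos (hx i) (hy i) hxy).ne' (hzero i (Finset.mem_univ i))

theorem tendsto_mul_exp_sub_mul_cocompact {a b : ℝ} (ha : 0 < a) (hb : 0 < b) :
    Tendsto (fun x => a * exp x - b * x) (cocompact ℝ) atTop := by
  rw [cocompact_eq_atBot_atTop, tendsto_sup]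
  constructor
  · refine tendsto_atTop_mono (fun x => ?_) (tendsto_id.const_mul_atBot_of_neg (neg_neg_of_pos hb))
    have := exp_pos x
    simp only [id]
    nlinarith
  · have hfactor : Tendsto (fun x => x * (a * (exp x / x ^ 1) - b)) atTop atTop :=
      tendsto_id.atTop_mul_atTop₀ <|
        tendsto_atTop_add_const_right _ _ ((tendsto_exp_div_pow_atTop 1).const_mul_atTop ha)
    refine hfactor.congr' ?_
    filter_upwards [eventually_ne_atTop 0] with x hx
    field_simp

theorem tendsto_sum_apply_cocompact {ι : Type*} [Fintype ι] {X : ι → Type*}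
    [∀ i, TopologicalSpace (X i)] {g : ∀ i, X i → ℝ}
    (hg : ∀ i, Tendsto (g i) (cocompact (X i)) atTop) (hbdd : ∀ i, BddBelow (Set.range (g i))) :
    Tendsto (fun x : ∀ i, X i => ∑ i, g i (x i)) (cocompact (∀ i, X i)) atTop := by
  choose B hB using hbdd
  have hB' : ∀ i x, B i ≤ g i x := fun i x => hB i ⟨x, rfl⟩
  rw [← coprodᵢ_cocompact, Filter.coprodᵢ, tendsto_iSup]
  intro i
  have hlower : ∀ x : ∀ i, X i, g i (x i) - B i + ∑ j, B j ≤ ∑ j, g j (x j) := fun x => by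
    have := Finset.single_le_sum (f := fun j => g j (x j) - B j)
      (fun j _ => sub_nonneg.2 (hB' j (x j))) (Finset.mem_univ i)
    rw [Finset.sum_sub_distrib] at this
    linarith
  refine tendsto_atTop_mono hlower (tendsto_atTop_add_const_right _ _ ?_)
  exact tendsto_atTop_add_const_right _ _ ((hg i).comp tendsto_comap)

theorem IsMinOn.hasDerivAt_eq_zero_of_mem_submodule {E : Type*} [AddCommGroup E] [Module ℝ E]
    {K : Submodule ℝ E} {F : E → ℝ} {u w : E} {d : ℝ} (hmin : IsMinOn F K u) (hu : u ∈ K)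
    (hw : w ∈ K) (hd : HasDerivAt (fun t : ℝ => F (u + t • w)) d 0) : d = 0 := by
  refine IsLocalMin.hasDerivAt_eq_zero (Eventually.of_forall fun t => ?_) hd
  simpa using hmin (K.add_mem hu (K.smul_mem t hw))

section DualFreeEnergy

variable {S : Type*} [Fintype S]

noncomputable def dualFreeEnergy (cbar γ u : S → ℝ) : ℝ :=
  ∑ s, (cbar s * exp (u s) - γ s * u s)

theorem continuous_dualFreeEnergy (cbar γ : S → ℝ) : Continuous (dualFreeEnergy cbar γ) := by
  unfold dualFreeEnergy
  fun_prop

theorem hasDerivAt_dualFreeEnergy_add_smul (cbar γ u w : S → ℝ) :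
    HasDerivAt (fun t : ℝ => dualFreeEnergy cbar γ (u + t • w))
      (((fun s => cbar s * exp (u s)) - γ) ⬝ᵥ w) 0 := by
  have hline : ∀ s, HasDerivAt (fun t : ℝ => u s + t * w s) (w s) 0 := fun s =>
    (hasDerivAt_mul_const (w s)).const_add (u s)
  show HasDerivAt (fun t => ∑ s, (cbar s * exp (u s + t * w s) - γ s * (u s + t * w s))) _ 0
  refine (HasDerivAt.fun_sum fun s _ =>
    ((hline s).exp.const_mul (cbar s)).sub ((hline s).const_mul (γ s))).congr_deriv ?_
  simp only [dotProduct, Pi.sub_apply, zero_mul, add_zero]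
  exact Finset.sum_congr rfl fun s _ => by ring

theorem tendsto_dualFreeEnergy_cocompact {cbar γ : S → ℝ} (hcbar : ∀ s, 0 < cbar s)
    (hγ : ∀ s, 0 < γ s) : Tendsto (dualFreeEnergy cbar γ) (cocompact (S → ℝ)) atTop := by
  have hg : ∀ s, Tendsto (fun x => cbar s * exp x - γ s * x) (cocompact ℝ) atTop := fun s =>
    tendsto_mul_exp_sub_mul_cocompact (hcbar s) (hγ s)
  refine tendsto_sum_apply_cocompact hg fun s => ?_
  obtain ⟨x₀, hx₀⟩ := (by fun_prop : Continuous fun x => cbar s * exp x - γ s * x).exists_forall_le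
    (hg s)
  exact ⟨_, Set.forall_mem_range.2 hx₀⟩

theorem exists_isMinOn_dualFreeEnergy {cbar γ : S → ℝ} (hcbar : ∀ s, 0 < cbar s)
    (hγ : ∀ s, 0 < γ s) (K : Submodule ℝ (S → ℝ)) :
    ∃ u ∈ K, IsMinOn (dualFreeEnergy cbar γ) K u :=
  (continuous_dualFreeEnergy cbar γ).continuousOn.exists_isMinOn' K.closed_of_finiteDimensional
    K.zero_mem <| ((tendsto_dualFreeEnergy_cocompact hcbar hγ).eventually
      (eventually_ge_atTop _)).filter_mono inf_le_left

end DualFreeEnergy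

theorem eq_of_sub_mem_range_of_mulVec_log_div_eq_zero {S R : Type*} [Fintype S] [Fintype R]
    {N : Matrix S R ℝ} {cbar x y : S → ℝ} (hcbar : ∀ s, 0 < cbar s) (hx : ∀ s, 0 < x s)
    (hy : ∀ s, 0 < y s) (hxy : x - y ∈ LinearMap.range N.mulVecLin)
    (hNx : Nᵀ *ᵥ (fun s => log (x s / cbar s)) = 0)
    (hNy : Nᵀ *ᵥ (fun s => log (y s / cbar s)) = 0) : x = y := by
  have hlog : (fun s => log (x s) - log (y s)) =
      (fun s => log (x s / cbar s)) - (fun s => log (y s / cbar s)) := by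
    funext s
    simp only [Pi.sub_apply, log_div (hx s).ne' (hcbar s).ne', log_div (hy s).ne' (hcbar s).ne']
    ring
  refine eq_of_sub_dotProduct_log_sub_log_eq_zero hx hy ?_
  refine (N.mem_range_mulVecLin_iff_forall_dotProduct_eq_zero _).1 hxy _ ?_
  rw [hlog, mulVec_sub, hNx, hNy, sub_zero]

/-- **Existence and uniqueness of the detailed-balance stationary state in each
stoichiometric simplex.** Given a stoichiometric matrix `N`, a strictly positive reference
state `c̄`, and a strictly positive `γ`, there is exactly one strictly positive `ĉ` with
`ĉ - γ ∈ range N` and `Nᵀ log(ĉ/c̄) = 0`. -/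
theorem stationary_state_exists_unique
    {S R : Type*} [Fintype S] [Fintype R]
    (N : Matrix S R ℝ) (cbar γ : S → ℝ)
    (hcbar : ∀ s, 0 < cbar s) (hγ : ∀ s, 0 < γ s) :
    ∃! chat : S → ℝ, (∀ s, 0 < chat s) ∧
      chat - γ ∈ LinearMap.range N.mulVecLin ∧
      Nᵀ.mulVec (fun s => Real.log (chat s / cbar s)) = 0 := by
  obtain ⟨u, huK, hmin⟩ := exists_isMinOn_dualFreeEnergy hcbar hγ (LinearMap.ker Nᵀ.mulVecLin)
  set chat : S → ℝ := fun s => cbar s * exp (u s)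
  have hchat : ∀ s, 0 < chat s := fun s => mul_pos (hcbar s) (exp_pos _)
  have hlog : (fun s => log (chat s / cbar s)) = u := funext fun s => by
    rw [mul_div_cancel_left₀ _ (hcbar s).ne', log_exp]
  have hrange : chat - γ ∈ LinearMap.range N.mulVecLin :=
    (N.mem_range_mulVecLin_iff_forall_dotProduct_eq_zero _).2 fun w hw =>
      hmin.hasDerivAt_eq_zero_of_mem_submodule huK hw (hasDerivAt_dualFreeEnergy_add_smul ..)
  have hker : Nᵀ *ᵥ (fun s => log (chat s / cbar s)) = 0 := by rw [hlog]; exact huK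
  refine ⟨chat, ⟨hchat, hrange, hker⟩, ?_⟩
  rintro c ⟨hc, hcγ, hcN⟩
  refine eq_of_sub_mem_range_of_mulVec_log_div_eq_zero hcbar hc hchat ?_ hcN hker
  simpa only [sub_sub_sub_cancel_right] using Submodule.sub_mem _ hcγ hrange
end

section
/- Let S and R be finite sets, N a real S×R matrix, W = range(N) and W^⊥ = ker(Nᵀ). Fix i ∈ S and a strictly positive vector c̄ ∈ ℝ^S. Then there exists exactly one pair (u, w) with u ∈ W^⊥, w ∈ W, and u = e_i + diag(1/c̄)·w. -/
open Matrix

/-- For each strictly positive `c̄` there is exactly one pair `(u, w)` with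
`u ∈ W^⊥ = ker Nᵀ`, `w ∈ W = range N`, and `u = e_i + diag(1/c̄)·w`. -/
theorem unique_pair_u_w
    {S R : Type*} [Fintype S] [Fintype R] [DecidableEq S]
    (N : Matrix S R ℝ) (i : S) (cbar : S → ℝ) (hcbar : ∀ s, 0 < cbar s) :
    ∃! p : (S → ℝ) × (S → ℝ),
      p.1 ∈ LinearMap.ker Nᵀ.mulVecLin ∧
      p.2 ∈ LinearMap.range N.mulVecLin ∧
      p.1 = Pi.single i 1 + fun s => p.2 s / cbar s := by
  classical
  set K := LinearMap.ker Nᵀ.mulVecLin with hK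
  set W := LinearMap.range N.mulVecLin with hW
  let D : (S → ℝ) →ₗ[ℝ] (S → ℝ) :=
    { toFun := fun w s => w s / cbar s
      map_add' := by intro x y; funext s; simp [add_div]
      map_smul' := by intro a x; funext s; simp [mul_div_assoc] }
  let L : (K × W) →ₗ[ℝ] (S → ℝ) :=
    K.subtype.comp (LinearMap.fst ℝ K W) - D.comp (W.subtype.comp (LinearMap.snd ℝ K W))
  have hL : ∀ p : K × W, L p = (p.1 : S → ℝ) - D (p.2 : S → ℝ) := fun p => rfl
  have hinj : Function.Injective L := by
    rw [← LinearMap.ker_eq_bot]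
    refine (Submodule.eq_bot_iff _).mpr ?_
    rintro ⟨⟨u, hu⟩, ⟨w, hw⟩⟩ hL0
    have hL' : u - D w = 0 := hL0
    have huw : u = D w := by rwa [sub_eq_zero] at hL'
    obtain ⟨x, hx⟩ := hw
    have hdot : u ⬝ᵥ w = 0 := by
      rw [← hx]
      simp only [Matrix.mulVecLin_apply]
      rw [Matrix.dotProduct_mulVec, ← Matrix.mulVec_transpose]
      have h0 : Nᵀ *ᵥ u = 0 := hu
      rw [h0, zero_dotProduct]
    have hsum : ∑ s, w s * w s / cbar s = 0 := by
      rw [huw] at hdot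
      simpa [dotProduct, D, div_mul_eq_mul_div] using hdot
    have hwz : w = 0 := by
      funext s
      have hnn : ∀ s ∈ Finset.univ, 0 ≤ w s * w s / cbar s := fun s _ =>
        div_nonneg (mul_self_nonneg _) (hcbar s).le
      have h1 := (Finset.sum_eq_zero_iff_of_nonneg hnn).mp hsum s (Finset.mem_univ s)
      have h2 := (div_eq_zero_iff.mp h1).resolve_right (ne_of_gt (hcbar s))
      exact mul_self_eq_zero.mp h2
    have huz : u = 0 := by rw [huw, hwz, map_zero]
    refine Prod.ext (Subtype.ext ?_) (Subtype.ext ?_) <;> simp [huz, hwz]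
  have hrank : Module.finrank ℝ (K × W) = Module.finrank ℝ (S → ℝ) := by
    rw [Module.finrank_prod]
    have h1 := LinearMap.finrank_range_add_finrank_ker (Nᵀ.mulVecLin)
    have h2 : Module.finrank ℝ W = Module.finrank ℝ (LinearMap.range Nᵀ.mulVecLin) := by
      have := Matrix.rank_transpose N
      simpa [Matrix.rank, hW] using this.symm
    rw [← hK] at h1
    omega
  have hsurj : Function.Surjective L :=
    (LinearMap.injective_iff_surjective_of_finrank_eq_finrank hrank).mp hinj
  obtain ⟨p, hp⟩ := hsurj (Pi.single i 1)
  refine ⟨((p.1 : S → ℝ), (p.2 : S → ℝ)), ⟨p.1.2, p.2.2, ?_⟩, ?_⟩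
  · have : (p.1 : S → ℝ) - D (p.2 : S → ℝ) = Pi.single i 1 := hp
    rw [sub_eq_iff_eq_add] at this
    exact this
  · rintro q ⟨hq1, hq2, hq3⟩
    have hq : L (⟨q.1, hq1⟩, ⟨q.2, hq2⟩) = Pi.single i 1 := by
      show q.1 - D q.2 = Pi.single i 1
      rw [sub_eq_iff_eq_add]
      exact hq3
    have := hinj (hq.trans hp.symm)
    have h1 : q.1 = (p.1 : S → ℝ) := congrArg (fun z => ((z.1 : K) : S → ℝ)) this
    have h2 : q.2 = (p.2 : S → ℝ) := congrArg (fun z => ((z.2 : W) : S → ℝ)) this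
    exact Prod.ext h1 h2
end

section
/- Let S and R be finite sets, N a real S×R matrix, W = range(N) and W^⊥ = ker(Nᵀ). Fix i ∈ S. If u ∈ W^⊥, w ∈ W, c̄ ∈ ℝ^S is strictly positive, and u − e_i = diag(1/c̄)·w, then 0 ≤ u_i ≤ 1. -/
open Matrix

/-- If `u ∈ W^⊥`, `w ∈ W`, `c̄ > 0` and `u − e_i = diag(1/c̄)·w`, then `0 ≤ u_i ≤ 1`. -/
theorem u_i_between_zero_and_one
    {S R : Type*} [Fintype S] [Fintype R] [DecidableEq S]
    (N : Matrix S R ℝ) (i : S) (u w cbar : S → ℝ)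
    (hu : u ∈ LinearMap.ker Nᵀ.mulVecLin)
    (hw : w ∈ LinearMap.range N.mulVecLin)
    (hcbar : ∀ s, 0 < cbar s)
    (huw : u - Pi.single i 1 = fun s => w s / cbar s) :
    0 ≤ u i ∧ u i ≤ 1 := by
  obtain ⟨x, hx⟩ := hw
  have hker : Nᵀ *ᵥ u = 0 := hu
  have horth : u ⬝ᵥ w = 0 := by
    rw [← hx]
    simp only [Matrix.mulVecLin_apply, Matrix.dotProduct_mulVec,
      ← Matrix.mulVec_transpose, hker]
    simp
  have hwdef : ∀ s, w s = cbar s * (u s - (Pi.single i 1 : S → ℝ) s) := by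
    intro s
    have := congrFun huw s
    simp only [Pi.sub_apply] at this
    rw [eq_div_iff (hcbar s).ne'] at this
    linear_combination -this
  have hsum : ∑ s, cbar s * u s * u s = cbar i * u i := by
    have h0 : ∑ s, u s * w s = 0 := horth
    have h1 : ∑ s, u s * w s
        = ∑ s, cbar s * u s * u s - ∑ s, cbar s * u s * (Pi.single i 1 : S → ℝ) s := by
      rw [← Finset.sum_sub_distrib]
      refine Finset.sum_congr rfl fun s _ => by rw [hwdef s]; ring
    have h2 : ∑ s, cbar s * u s * (Pi.single i 1 : S → ℝ) s = cbar i * u i := by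
      rw [Finset.sum_eq_single i]
      · simp
      · intro b _ hb; simp [Pi.single_apply, hb]
      · simp
    rw [h1, h2] at h0
    linarith
  have hnn : ∀ s ∈ Finset.univ, (0:ℝ) ≤ cbar s * u s * u s := fun s _ => by
    have := (hcbar s).le
    nlinarith [sq_nonneg (u s)]
  have hge : cbar i * u i * u i ≤ ∑ s, cbar s * u s * u s :=
    Finset.single_le_sum hnn (Finset.mem_univ i)
  have hpos := hcbar i
  have h0 : (0:ℝ) ≤ cbar i * u i := hsum ▸ Finset.sum_nonneg hnn
  have hsq : u i * u i ≤ u i := by nlinarith [hge.trans_eq hsum]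
  have h0i : 0 ≤ u i := nonneg_of_mul_nonneg_right h0 hpos
  exact ⟨h0i, by nlinarith [hsq, h0i]⟩
end

section
/- Let S and R be finite sets, N a real S×R matrix, W = range(N), W^⊥ = ker(Nᵀ), and fix distinct i, o ∈ S. Then the supremum of the set {u_o : u ∈ W^⊥, and there exist w ∈ W and a strictly positive c̄ ∈ ℝ^S with u − e_i = diag(1/c̄)·w} is at most the supremum of the set {u_o : u is elementary in W^⊥ and u_i = 1} ∪ {0}. -/
open Matrix

/-- A vector `v` is elementary in a linear subspace `V ⊆ ℝ^S` if `v ∈ V`, `v ≠ 0`, and no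
nonzero `v' ∈ V` has support strictly contained in the support of `v`. -/
def IsElementary {S : Type*} (V : Submodule ℝ (S → ℝ)) (v : S → ℝ) : Prop :=
  v ∈ V ∧ v ≠ 0 ∧ ∀ v' ∈ V, v' ≠ 0 → ¬ Function.support v' ⊂ Function.support v

/-! Writing `w = c̄ ⊙ (u - eᵢ)` and pairing with `v ∈ W^⊥` gives `∑ₛ c̄ₛ vₛ uₛ = c̄ᵢ vᵢ`.
For `v = u` this forces `uᵢ ≤ 1`, and for `v ≠ 0` sign-conformal to `u` the left side is positive,
so `vᵢ > 0`. Decompose `u` as a sum of elementary vectors `f` of `W^⊥` conformal to it: each has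
`f_i > 0`, hence `f_o ≤ f_i M` with `M` the right-hand supremum, and summing gives
`u_o ≤ u_i M ≤ M`. -/

open Function

section Conformal

variable {S : Type*}

def IsConformal (x u : S → ℝ) : Prop :=
  ∀ s, x s ≠ 0 → 0 < x s * u s

theorem isConformal_self (u : S → ℝ) : IsConformal u u :=
  fun _ hs => mul_self_pos.2 hs

theorem IsConformal.of_mul_nonneg {x u : S → ℝ} (h : ∀ s, 0 ≤ x s * u s)
    (hxu : support x ⊆ support u) : IsConformal x u :=
  fun s hs => (h s).lt_of_ne' (mul_ne_zero hs (hxu hs))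

theorem IsConformal.mul_nonneg {x u : S → ℝ} (h : IsConformal x u) (s : S) :
    0 ≤ x s * u s := by
  by_cases hs : x s = 0
  · simp [hs]
  · exact (h s hs).le

theorem IsConformal.support_subset {x u : S → ℝ} (h : IsConformal x u) :
    support x ⊆ support u :=
  fun s hs => right_ne_zero_of_mul (h s hs).ne'

theorem IsConformal.trans {x y u : S → ℝ} (hxy : IsConformal x y) (hyu : IsConformal y u) :
    IsConformal x u := by
  intro s hs
  have hxy_pos := hxy s hs
  have hyu_pos := hyu s (right_ne_zero_of_mul hxy_pos.ne')
  have : 0 < (x s * u s) * (y s * y s) := by nlinarith [mul_pos hxy_pos hyu_pos]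
  exact pos_of_mul_pos_left this (mul_self_nonneg _)

theorem IsConformal.smul {x u : S → ℝ} (h : IsConformal x u) {t : ℝ} (ht : 0 < t) :
    IsConformal (t • x) u := by
  intro s hs
  simp only [Pi.smul_apply, smul_eq_mul] at hs ⊢
  rw [mul_assoc]
  exact mul_pos ht (h s (right_ne_zero_of_mul hs))

/-- Moving `u` against `v` until the first coordinate where they agree in sign vanishes. -/
theorem exists_sub_smul_isConformal [Finite S] {u v : S → ℝ} (hvu : support v ⊆ support u)
    (hpos : ∃ s, 0 < v s * u s) :
    ∃ t : ℝ, 0 < t ∧ IsConformal (u - t • v) u ∧ support (u - t • v) ⊂ support u := by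
  obtain ⟨q, hq, hq_min⟩ := Set.exists_min_image {s | 0 < v s * u s} (fun s => u s / v s)
    (Set.toFinite _) hpos
  have hvq : v q ≠ 0 := left_ne_zero_of_mul hq.ne'
  set t := u q / v q
  have ht : 0 < t := div_pos_iff.2 (mul_pos_iff.1 (mul_comm (v q) (u q) ▸ hq))
  have hconf : IsConformal (u - t • v) u := by
    refine .of_mul_nonneg (fun s => ?_) (fun s hs => ?_)
    · simp only [Pi.sub_apply, Pi.smul_apply, smul_eq_mul]
      by_cases hs : 0 < v s * u s
      · have hvs : v s ≠ 0 := left_ne_zero_of_mul hs.ne'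
        have : (u s - t * v s) * u s = v s * u s * (u s / v s - t) := by
          field_simp
        rw [this]
        exact mul_nonneg hs.le (sub_nonneg.2 (hq_min s hs))
      · nlinarith [mul_le_mul_of_nonneg_left (not_lt.1 hs) ht.le, mul_self_nonneg (u s)]
    · by_contra hus
      have hvs : v s = 0 := by_contra fun h => hus (hvu h)
      exact hs (by simp [notMem_support.1 hus, hvs])
  refine ⟨t, ht, hconf, hconf.support_subset.ssubset_of_ne fun h => ?_⟩
  have hq_supp : q ∈ support (u - t • v) := h ▸ right_ne_zero_of_mul hq.ne'
  exact hq_supp (by simp [t, div_mul_cancel₀ _ hvq])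

end Conformal

section Elementary

variable {S : Type*} {V : Submodule ℝ (S → ℝ)}

theorem IsElementary.smul {v : S → ℝ} (h : IsElementary V v) {c : ℝ} (hc : c ≠ 0) :
    IsElementary V (c • v) := by
  obtain ⟨hv, hv0, hmin⟩ := h
  refine ⟨V.smul_mem c hv, smul_ne_zero hc hv0, fun v' hv' hv'0 hss => ?_⟩
  exact hmin v' hv' hv'0 (by rwa [support_const_smul_of_ne_zero c v hc] at hss)

theorem IsElementary.eq_of_support_eq {u v : S → ℝ} {i : S} (hu : IsElementary V u)
    (hv : IsElementary V v) (hui : u i = 1) (hvi : v i = 1) (hsupp : support u = support v) :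
    u = v := by
  by_contra hne
  refine hu.2.2 (u - v) (V.sub_mem hu.1 hv.1) (sub_ne_zero.2 hne)
    ⟨fun s hs => ?_, fun h => ?_⟩
  · by_contra hus
    have hvs : s ∉ support v := hsupp ▸ hus
    exact hs (by simp [notMem_support.1 hus, notMem_support.1 hvs])
  · exact h (show i ∈ support u by simp [hui]) (by simp [hui, hvi])

theorem setOf_isElementary_apply_eq_one_finite [Finite S] (i : S) :
    {v : S → ℝ | IsElementary V v ∧ v i = 1}.Finite :=
  .of_finite_image (Set.toFinite _) fun _ hu _ hv h => hu.1.eq_of_support_eq hv.1 hu.2 hv.2 h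

theorem IsElementary.apply_le_mul {v : S → ℝ} {i o : S} {M : ℝ}
    (hM : ∀ u, IsElementary V u → u i = 1 → u o ≤ M) (hv : IsElementary V v) (hvi : 0 < v i) :
    v o ≤ v i * M := by
  have h := hM _ (hv.smul (inv_ne_zero hvi.ne')) (by simp [hvi.ne'])
  simp only [Pi.smul_apply, smul_eq_mul] at h
  rwa [inv_mul_le_iff₀ hvi] at h

variable [Finite S]

theorem induction_on_support {P : (S → ℝ) → Prop}
    (h : ∀ u, (∀ x, support x ⊂ support u → P x) → P u) (u : S → ℝ) : P u :=
  (InvImage.wf support wellFounded_lt).induction u h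

theorem exists_isElementary_isConformal {u : S → ℝ} (hu : u ∈ V) (hu0 : u ≠ 0) :
    ∃ v, IsElementary V v ∧ IsConformal v u := by
  induction u using induction_on_support with
  | h u ih =>
  by_cases hel : IsElementary V u
  · exact ⟨u, hel, isConformal_self u⟩
  obtain ⟨v, hv, hv0, hvu⟩ : ∃ v ∈ V, v ≠ 0 ∧ support v ⊂ support u := by
    simpa [IsElementary, hu, hu0] using hel
  obtain ⟨s, hs⟩ := ne_iff.1 hv0
  obtain ⟨v, hv, hvu, hpos⟩ : ∃ v ∈ V, support v ⊂ support u ∧ ∃ s, 0 < v s * u s := by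
    rcases (mul_ne_zero hs (hvu.subset hs)).lt_or_gt with hneg | hpos
    · exact ⟨-v, V.neg_mem hv, by rwa [support_neg], s, by simpa using hneg⟩
    · exact ⟨v, hv, hvu, s, hpos⟩
  obtain ⟨t, -, hconf, hlt⟩ := exists_sub_smul_isConformal hvu.subset hpos
  obtain ⟨r, hru, hrv⟩ := Set.exists_of_ssubset hvu
  have hx0 : u - t • v ≠ 0 := ne_iff.2 ⟨r, by simpa [notMem_support.1 hrv] using hru⟩
  obtain ⟨w, hw, hwx⟩ := ih _ hlt (V.sub_mem hu (V.smul_mem t hv)) hx0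
  exact ⟨w, hw, hwx.trans hconf⟩

theorem exists_multiset_isElementary_isConformal_sum_eq {u : S → ℝ} (hu : u ∈ V) :
    ∃ F : Multiset (S → ℝ),
      (∀ v ∈ F, IsElementary V v ∧ IsConformal v u) ∧ F.sum = u := by
  induction u using induction_on_support with
  | h u ih =>
  by_cases hu0 : u = 0
  · exact ⟨0, by simp, by simp [hu0]⟩
  obtain ⟨v, hv, hvu⟩ := exists_isElementary_isConformal hu hu0
  obtain ⟨s, hs⟩ := ne_iff.1 hv.2.1
  obtain ⟨t, ht, hconf, hlt⟩ :=
    exists_sub_smul_isConformal hvu.support_subset ⟨s, hvu s hs⟩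
  obtain ⟨F, hF, hsum⟩ := ih _ hlt (V.sub_mem hu (V.smul_mem t hv.1))
  refine ⟨t • v ::ₘ F, ?_, by simp [hsum]⟩
  simp only [Multiset.mem_cons, forall_eq_or_imp]
  exact ⟨⟨hv.smul ht.ne', hvu.smul ht⟩, fun w hw => ⟨(hF w hw).1, (hF w hw).2.trans hconf⟩⟩

theorem apply_le_mul_of_forall_isConformal {u : S → ℝ} {i o : S} {M : ℝ} (hu : u ∈ V)
    (hpos : ∀ v, IsElementary V v → IsConformal v u → 0 < v i)
    (hM : ∀ v, IsElementary V v → v i = 1 → v o ≤ M) :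
    u o ≤ u i * M := by
  obtain ⟨F, hF, rfl⟩ := exists_multiset_isElementary_isConformal_sum_eq hu
  simp only [Pi.multiset_sum_apply, ← Multiset.sum_map_mul_right]
  exact Multiset.sum_map_le_sum_map _ _ fun v hv =>
    (hF v hv).1.apply_le_mul hM (hpos v (hF v hv).1 (hF v hv).2)

end Elementary

section Weighted

variable {S : Type*} [Fintype S] {u v w c : S → ℝ} {i : S}

theorem sum_mul_mul_eq_of_dotProduct_eq_zero [DecidableEq S] (hc : ∀ s, 0 < c s)
    (hu : u - Pi.single i 1 = fun s => w s / c s) (hvw : v ⬝ᵥ w = 0) :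
    ∑ s, c s * (v s * u s) = c i * v i := by
  have hw : w = fun s => c s * u s - c s * (Pi.single i 1 : S → ℝ) s := by
    ext s
    have := congrFun hu s
    simp only [Pi.sub_apply] at this
    rw [eq_div_iff (hc s).ne'] at this
    linear_combination -this
  simp only [hw, dotProduct, mul_sub, Finset.sum_sub_distrib, Pi.single_apply, mul_ite,
    mul_one, mul_zero, Finset.sum_ite_eq', Finset.mem_univ, if_true] at hvw
  have : ∑ s, c s * (v s * u s) = ∑ s, v s * (c s * u s) :=
    Finset.sum_congr rfl fun s _ => by ring
  linarith

theorem apply_le_one_of_sum_mul_mul_eq (hc : ∀ s, 0 < c s)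
    (h : ∑ s, c s * (u s * u s) = c i * u i) : u i ≤ 1 := by
  have hle : c i * (u i * u i) ≤ c i * u i :=
    h ▸ Finset.single_le_sum (fun s _ => mul_nonneg (hc s).le (mul_self_nonneg _))
      (Finset.mem_univ i)
  nlinarith [le_of_mul_le_mul_left hle (hc i)]

theorem IsConformal.apply_pos_of_sum_mul_mul_eq (hc : ∀ s, 0 < c s) (hvu : IsConformal v u)
    (hv0 : v ≠ 0) (h : ∑ s, c s * (v s * u s) = c i * v i) : 0 < v i := by
  obtain ⟨s, hs⟩ := ne_iff.1 hv0
  have : 0 < c i * v i :=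
    h ▸ Finset.sum_pos' (fun s _ => _root_.mul_nonneg (hc s).le (hvu.mul_nonneg s))
      ⟨s, Finset.mem_univ s, mul_pos (hc s) (hvu s hs)⟩
  exact pos_of_mul_pos_right this (hc i).le

end Weighted

theorem Matrix.dotProduct_eq_zero_of_mem_ker_transpose_of_mem_range {S R : Type*} [Fintype S]
    [Fintype R] {N : Matrix S R ℝ} {v w : S → ℝ} (hv : v ∈ LinearMap.ker Nᵀ.mulVecLin)
    (hw : w ∈ LinearMap.range N.mulVecLin) : v ⬝ᵥ w = 0 := by
  obtain ⟨y, rfl⟩ := hw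
  rw [LinearMap.mem_ker, mulVecLin_apply, mulVec_transpose] at hv
  rw [mulVecLin_apply, dotProduct_mulVec, hv, zero_dotProduct]

theorem sup_le_sup_elementary_general
    {S R : Type*} [Fintype S] [Fintype R] [DecidableEq S]
    (N : Matrix S R ℝ) (i o : S) :
    sSup {x : ℝ | ∃ u w cbar : S → ℝ,
        u ∈ LinearMap.ker Nᵀ.mulVecLin ∧
        w ∈ LinearMap.range N.mulVecLin ∧
        (∀ s, 0 < cbar s) ∧
        (u - Pi.single i 1 = fun s => w s / cbar s) ∧
        x = u o} ≤
    sSup ({x : ℝ | ∃ u : S → ℝ,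
        IsElementary (LinearMap.ker Nᵀ.mulVecLin) u ∧ u i = 1 ∧ x = u o} ∪ {0}) := by
  set V := LinearMap.ker Nᵀ.mulVecLin
  set B := {x : ℝ | ∃ u : S → ℝ, IsElementary V u ∧ u i = 1 ∧ x = u o} ∪ {0}
  have hB : BddAbove B := by
    have hfin := (setOf_isElementary_apply_eq_one_finite (V := V) i).image fun u => u o
    refine (hfin.subset ?_).bddAbove.union bddAbove_singleton
    rintro _ ⟨u, hu, hui, rfl⟩
    exact ⟨u, ⟨hu, hui⟩, rfl⟩
  have hM0 : 0 ≤ sSup B := le_csSup hB (Or.inr rfl)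
  refine Real.sSup_le ?_ hM0
  rintro _ ⟨u, w, c, hu, hw, hc, huw, rfl⟩
  have hsum (v) (hv : v ∈ V) := sum_mul_mul_eq_of_dotProduct_eq_zero hc huw
    (dotProduct_eq_zero_of_mem_ker_transpose_of_mem_range hv hw)
  calc u o ≤ u i * sSup B :=
        apply_le_mul_of_forall_isConformal hu
          (fun v hv hvu => hvu.apply_pos_of_sum_mul_mul_eq hc hv.2.1 (hsum v hv.1))
          (fun v hv hvi => le_csSup hB (Or.inl ⟨v, hv, hvi, rfl⟩))
    _ ≤ sSup B := mul_le_of_le_one_left hM0 (apply_le_one_of_sum_mul_mul_eq hc (hsum u hu))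

/-- Lemma 3.6 (`lem:o_u`): the supremum of achievable values `u_o` is at most the supremum of
`u_o` over elementary vectors `u ∈ W^⊥` with `u_i = 1` (together with `0`). -/
theorem sup_le_sup_elementary
    {S R : Type*} [Fintype S] [Fintype R] [DecidableEq S]
    (N : Matrix S R ℝ) (i o : S) (hio : i ≠ o) :
    sSup {x : ℝ | ∃ u w cbar : S → ℝ,
        u ∈ LinearMap.ker Nᵀ.mulVecLin ∧
        w ∈ LinearMap.range N.mulVecLin ∧
        (∀ s, 0 < cbar s) ∧
        (u - Pi.single i 1 = fun s => w s / cbar s) ∧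
        x = u o} ≤
    sSup ({x : ℝ | ∃ u : S → ℝ,
        IsElementary (LinearMap.ker Nᵀ.mulVecLin) u ∧ u i = 1 ∧ x = u o} ∪ {0}) :=
  sup_le_sup_elementary_general N i o
end

section
/- Let S and R be finite sets, N a real S×R matrix, c̄ ∈ ℝ^S strictly positive, k ∈ ℝ^R with nonnegative entries, and let A = −diag(c̄)⁻¹ · N · diag(k) · Nᵀ. Then for all i, o ∈ S and all t ≥ 0, |(e^{tA})_{oi}| ≤ √(c̄_i / c̄_o). (General upper bound on Sensitivity.) -/
/-!
With `d = √c̄`, the matrix `A = -diag(d)⁻² N diag(k) Nᵀ` is similar, via `diag(d)`, to `-P` for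
the symmetric positive semidefinite `P = diag(d)⁻¹ N diag(k) Nᵀ diag(d)⁻¹`. Hence
`(e^{tA})_{oi} = (e^{-tP})_{oi} · d_i / d_o`, and `e^{-tP} = U diag(e^{-tλ}) Uᵀ` with `U` orthogonal and
all `e^{-tλ} ∈ (0, 1]`, so each of its entries is at most `1` in absolute value.
-/

open Matrix

namespace Matrix

variable {n : Type*} [Fintype n] [DecidableEq n]

lemma sum_sq_apply_eq_one_of_mul_transpose_eq_one {U : Matrix n n ℝ} (hU : U * Uᵀ = 1) (o : n) :
    ∑ j, U o j ^ 2 = 1 := by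
  simpa [mul_apply, sq] using congr_fun₂ hU o o

lemma abs_mul_diagonal_mul_transpose_apply_le_one {U : Matrix n n ℝ} (hU : U * Uᵀ = 1)
    {w : n → ℝ} (hw : ∀ j, |w j| ≤ 1) (o i : n) :
    |(U * diagonal w * Uᵀ) o i| ≤ 1 := by
  have hterm : ∀ j, |U o j * w j * U i j| ≤ (U o j ^ 2 + U i j ^ 2) / 2 := fun j => by
    have hamgm := two_mul_le_add_sq |U o j| |U i j|
    rw [sq_abs, sq_abs] at hamgm
    calc |U o j * w j * U i j| = |w j| * (|U o j| * |U i j|) := by rw [abs_mul, abs_mul]; ring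
      _ ≤ 1 * (|U o j| * |U i j|) := by gcongr; exact hw j
      _ ≤ (U o j ^ 2 + U i j ^ 2) / 2 := by linarith
  calc |(U * diagonal w * Uᵀ) o i| = |∑ j, U o j * w j * U i j| := by
        rw [mul_apply]; simp only [mul_diagonal, transpose_apply]
    _ ≤ ∑ j, (U o j ^ 2 + U i j ^ 2) / 2 :=
        (Finset.abs_sum_le_sum_abs _ _).trans (Finset.sum_le_sum fun j _ => hterm j)
    _ = 1 := by
        rw [← Finset.sum_div, Finset.sum_add_distrib,
          sum_sq_apply_eq_one_of_mul_transpose_eq_one hU,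
          sum_sq_apply_eq_one_of_mul_transpose_eq_one hU]
        norm_num

lemma IsHermitian.exp_smul_eq {P : Matrix n n ℝ} (hP : P.IsHermitian) (s : ℝ) :
    NormedSpace.exp (s • P) =
      (hP.eigenvectorUnitary : Matrix n n ℝ) * diagonal (fun j => Real.exp (s * hP.eigenvalues j))
        * (hP.eigenvectorUnitary : Matrix n n ℝ)ᵀ := by
  set U : Matrix n n ℝ := ↑hP.eigenvectorUnitary
  have hUinv : U⁻¹ = Uᵀ := inv_eq_right_inv (mem_unitaryGroup_iff.mp hP.eigenvectorUnitary.2)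
  have hspec : s • P = U * diagonal (s • hP.eigenvalues) * U⁻¹ := by
    conv_lhs => rw [hP.spectral_theorem]
    simp [hUinv, star_eq_conjTranspose, U]
  rw [hspec, exp_conj U _ (Unitary.isUnit_coe ..), exp_diagonal, hUinv, Real.exp_eq_exp_ℝ,
    Pi.exp_def]
  rfl

lemma PosSemidef.abs_exp_smul_apply_le_one {P : Matrix n n ℝ} (hP : P.PosSemidef) {s : ℝ}
    (hs : s ≤ 0) (o i : n) : |NormedSpace.exp (s • P) o i| ≤ 1 := by
  set U : Matrix n n ℝ := ↑hP.isHermitian.eigenvectorUnitary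
  have hU : U * Uᵀ = 1 := mem_unitaryGroup_iff.mp hP.isHermitian.eigenvectorUnitary.2
  rw [hP.isHermitian.exp_smul_eq]
  refine abs_mul_diagonal_mul_transpose_apply_le_one hU (fun j => ?_) o i
  rw [Real.abs_exp, Real.exp_le_one_iff]
  exact mul_nonpos_of_nonpos_of_nonneg hs (hP.eigenvalues_nonneg j)

lemma exp_diagonal_inv_mul_mul_diagonal_apply {𝕜 : Type*} [RCLike 𝕜] {d : n → 𝕜}
    (hd : ∀ s, d s ≠ 0) (X : Matrix n n 𝕜) (o i : n) :
    NormedSpace.exp (diagonal d⁻¹ * X * diagonal d) o i = (d o)⁻¹ * NormedSpace.exp X o i * d i := by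
  have hinv : (diagonal d)⁻¹ = diagonal d⁻¹ :=
    inv_eq_left_inv <| by simp [diagonal_mul_diagonal, hd]
  have hunit : IsUnit (diagonal d) :=
    isUnit_diagonal.mpr (Pi.isUnit_iff.mpr fun s => (hd s).isUnit)
  rw [← hinv, exp_conj' _ _ hunit, hinv, mul_diagonal, diagonal_mul, Pi.inv_apply]

lemma diagonal_inv_mul_eq_conj {K : Type*} [Field K] {d : n → K} (hd : ∀ s, d s ≠ 0)
    (Q : Matrix n n K) :
    diagonal (d * d)⁻¹ * Q = diagonal d⁻¹ * (diagonal d⁻¹ * Q * diagonal d⁻¹) * diagonal d := by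
  have hcancel : diagonal d⁻¹ * diagonal d = 1 := by simp [diagonal_mul_diagonal, hd]
  rw [Matrix.mul_assoc _ _ (diagonal d), Matrix.mul_assoc _ (diagonal d⁻¹), hcancel,
    Matrix.mul_one, ← Matrix.mul_assoc, diagonal_mul_diagonal, mul_inv]
  rfl

end Matrix

/-- Theorem 4.1 (`th:upper-bound-sensitivity`): general upper bound on the Sensitivity. For
`A = −diag(c̄)⁻¹ N diag(k) Nᵀ` with `c̄ > 0` and `k ≥ 0`, every entry of the matrix
exponential satisfies `|(e^{tA})_{oi}| ≤ √(c̄_i/c̄_o)` for `t ≥ 0`. -/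
theorem sensitivity_upper_bound
    {S R : Type*} [Fintype S] [Fintype R] [DecidableEq S] [DecidableEq R]
    (N : Matrix S R ℝ) (cbar : S → ℝ) (k : R → ℝ)
    (hcbar : ∀ s, 0 < cbar s) (hk : ∀ r, 0 ≤ k r)
    (A : Matrix S S ℝ)
    (hA : A = -(Matrix.diagonal (fun s => (cbar s)⁻¹) * N * Matrix.diagonal k * Nᵀ)) :
    ∀ (i o : S) (t : ℝ), 0 ≤ t →
      |NormedSpace.exp (t • A) o i| ≤ Real.sqrt (cbar i / cbar o) := by
  intro i o t ht
  set d : S → ℝ := fun s => √(cbar s)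
  have hd : ∀ s, 0 < d s := fun s => Real.sqrt_pos.mpr (hcbar s)
  set P := diagonal d⁻¹ * (N * diagonal k * Nᵀ) * diagonal d⁻¹
  have hP : P.PosSemidef := by
    have := (posSemidef_diagonal_iff.mpr hk).mul_mul_conjTranspose_same (diagonal d⁻¹ * N)
    simpa [P, Matrix.mul_assoc, conjTranspose_eq_transpose_of_trivial] using this
  have hdd : (fun s => (cbar s)⁻¹) = (d * d)⁻¹ := by
    funext s; simp [d, Real.mul_self_sqrt (hcbar s).le]
  have htA : t • A = diagonal d⁻¹ * ((-t) • P) * diagonal d := by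
    rw [hA, hdd, Matrix.mul_assoc _ N, Matrix.mul_assoc _ (N * _),
      diagonal_inv_mul_eq_conj (fun s => (hd s).ne'), Matrix.mul_smul, Matrix.smul_mul, neg_smul,
      smul_neg]
  rw [htA, exp_diagonal_inv_mul_mul_diagonal_apply (fun s => (hd s).ne'),
    Real.sqrt_div (hcbar i).le]
  have hexp := hP.abs_exp_smul_apply_le_one (neg_nonpos.mpr ht) o i
  calc |(d o)⁻¹ * NormedSpace.exp ((-t) • P) o i * d i|
      = |NormedSpace.exp ((-t) • P) o i| * (d i / d o) := by
        rw [abs_mul, abs_mul, abs_of_pos (hd i), abs_inv, abs_of_pos (hd o)]; ring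
    _ ≤ d i / d o := mul_le_of_le_one_left (div_pos (hd i) (hd o)).le hexp
end

section
/- Let S and R be finite sets, N a real S×R matrix, c̄ ∈ ℝ^S strictly positive, k ∈ ℝ^R with nonnegative entries, and let A = −diag(c̄)⁻¹ · N · diag(k) · Nᵀ. Then there exists a real S×S matrix L such that e^{tA} converges (entrywise) to L as t → +∞. -/
/-!
Conjugating by `D = diag(√c̄)⁻¹` turns `diag(c̄)⁻¹ N diag(k) Nᵀ` into the positive semidefinite
matrix `D N diag(k) Nᵀ D`, and a unitary change of basis diagonalises that one with eigenvalues
`μᵢ ≥ 0`. So `e^{tA}` is conjugate to `diag(e^{-t μᵢ})`, which converges to the diagonal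
indicator of `μᵢ = 0`.
-/

open Matrix NormedSpace Filter Topology

open scoped ComplexOrder

theorem Real.tendsto_exp_mul_atTop_of_nonpos {a : ℝ} (ha : a ≤ 0) :
    Tendsto (fun t => Real.exp (t * a)) atTop (𝓝 (if a = 0 then 1 else 0)) := by
  rcases ha.lt_or_eq with ha | rfl
  · rw [if_neg ha.ne]
    exact Real.tendsto_exp_atBot.comp (tendsto_id.atTop_mul_const_of_neg ha)
  · simp

namespace Matrix

variable {n : Type*} [Fintype n] [DecidableEq n]

theorem tendsto_exp_conj {𝔸 α : Type*} [NormedCommRing 𝔸] [NormedAlgebra ℚ 𝔸] [CompleteSpace 𝔸]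
    {l : Filter α} {f : α → Matrix n n 𝔸} {L U : Matrix n n 𝔸} (hU : IsUnit U)
    (h : Tendsto (fun a => exp (f a)) l (𝓝 L)) :
    Tendsto (fun a => exp (U * f a * U⁻¹)) l (𝓝 (U * L * U⁻¹)) := by
  simp_rw [exp_conj _ _ hU]
  exact (h.const_mul U).mul_const U⁻¹

variable {𝕜 : Type*} [RCLike 𝕜]

theorem exists_tendsto_exp_smul_diagonal_ofReal {v : n → ℝ} (hv : ∀ i, v i ≤ 0) :
    ∃ L, Tendsto (fun t : ℝ => exp (t • diagonal fun i => (v i : 𝕜))) atTop (𝓝 L) := by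
  have hexp (t : ℝ) : exp (t • diagonal fun i => (v i : 𝕜)) =
      diagonal fun i => ((Real.exp (t * v i) : ℝ) : 𝕜) := by
    rw [← diagonal_smul, exp_diagonal]
    congr 1
    funext i
    rw [Pi.coe_exp, Pi.smul_apply, Real.exp_eq_exp_ℝ, ← RCLike.algebraMap_eq_ofReal,
      algebraMap_exp_comm, map_mul, Algebra.smul_def]
  simp_rw [hexp]
  exact ⟨_, (continuous_id.matrix_diagonal.tendsto _).comp <| tendsto_pi_nhds.2 fun i =>
    (RCLike.continuous_ofReal.tendsto _).comp (Real.tendsto_exp_mul_atTop_of_nonpos (hv i))⟩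

theorem PosSemidef.exists_tendsto_exp_smul_neg {B : Matrix n n 𝕜} (hB : B.PosSemidef) :
    ∃ L, Tendsto (fun t : ℝ => exp (t • -B)) atTop (𝓝 L) := by
  set U := hB.isHermitian.eigenvectorUnitary
  have hU_inv : (U : Matrix n n 𝕜)⁻¹ = star U :=
    inv_eq_left_inv (Unitary.star_mul_self_of_mem U.2)
  have hB_neg : -B =
      U * diagonal (fun i => ((-hB.isHermitian.eigenvalues i : ℝ) : 𝕜)) * (U : Matrix n n 𝕜)⁻¹ := by
    conv_lhs => rw [hB.isHermitian.spectral_theorem, Unitary.conjStarAlgAut_apply]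
    rw [hU_inv, ← Matrix.neg_mul, ← Matrix.mul_neg, diagonal_neg]
    congr
    ext
    simp
  obtain ⟨L, hL⟩ := exists_tendsto_exp_smul_diagonal_ofReal (𝕜 := 𝕜)
    (fun i => neg_nonpos.2 (hB.eigenvalues_nonneg i))
  refine ⟨_, (tendsto_exp_conj (Unitary.isUnit_coe (U := U)) hL).congr fun t => ?_⟩
  rw [hB_neg, Matrix.mul_smul, Matrix.smul_mul]

theorem PosSemidef.exists_tendsto_exp_smul_neg_diagonal_mul {M : Matrix n n 𝕜}
    (hM : M.PosSemidef) {w : n → ℝ} (hw : ∀ i, 0 < w i) :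
    ∃ L, Tendsto (fun t : ℝ => exp (t • -(diagonal (fun i => (w i : 𝕜)) * M))) atTop (𝓝 L) := by
  set D : Matrix n n 𝕜 := diagonal fun i => (√(w i) : 𝕜)
  have hD : IsUnit D := isUnit_diagonal.2 <| Pi.isUnit_iff.2 fun i =>
    Ne.isUnit (RCLike.ofReal_ne_zero.2 (Real.sqrt_pos.2 (hw i)).ne')
  have hDMD : (D * M * D).PosSemidef := by
    simpa [D, diagonal_conjTranspose, Pi.star_def, RCLike.star_def] using
      hM.mul_mul_conjTranspose_same D
  have hDD : D * D = diagonal fun i => (w i : 𝕜) := by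
    simp [D, diagonal_mul_diagonal, ← RCLike.ofReal_mul, Real.mul_self_sqrt (hw _).le]
  have hsim : -(diagonal (fun i => (w i : 𝕜)) * M) = D * -(D * M * D) * D⁻¹ := by
    rw [Matrix.mul_neg, Matrix.neg_mul, ← hDD]
    simp only [Matrix.mul_assoc, mul_nonsing_inv _ ((isUnit_iff_isUnit_det D).1 hD),
      Matrix.mul_one]
  obtain ⟨L, hL⟩ := hDMD.exists_tendsto_exp_smul_neg
  refine ⟨_, (tendsto_exp_conj hD hL).congr fun t => ?_⟩
  rw [hsim, Matrix.mul_smul, Matrix.smul_mul]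

end Matrix

/-- For `A = −diag(c̄)⁻¹ N diag(k) Nᵀ` with `c̄ > 0` and `k ≥ 0`, the matrix exponential
`e^{tA}` converges (entrywise, i.e. in the product topology on matrices) to some matrix `L`
as `t → +∞`. -/
theorem exp_tendsto_limit
    {S R : Type*} [Fintype S] [Fintype R] [DecidableEq S] [DecidableEq R]
    (N : Matrix S R ℝ) (cbar : S → ℝ) (k : R → ℝ)
    (hcbar : ∀ s, 0 < cbar s) (hk : ∀ r, 0 ≤ k r)
    (A : Matrix S S ℝ)
    (hA : A = -(Matrix.diagonal (fun s => (cbar s)⁻¹) * N * Matrix.diagonal k * Nᵀ)) :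
    ∃ L : Matrix S S ℝ,
      Filter.Tendsto (fun t : ℝ => exp (t • A)) Filter.atTop (nhds L) := by
  have hM : (N * diagonal k * Nᵀ).PosSemidef := by
    simpa using (posSemidef_diagonal_iff.2 hk).mul_mul_conjTranspose_same N
  simpa [hA, Matrix.mul_assoc] using
    hM.exists_tendsto_exp_smul_neg_diagonal_mul (fun s => inv_pos.2 (hcbar s))
end

section
/- Let S and R be finite sets, N a real S×R matrix, c̄ ∈ ℝ^S strictly positive, k ∈ ℝ^R with nonnegative entries, and let A = −diag(c̄)⁻¹ · N · diag(k) · Nᵀ. If A is normal (A·Aᵀ = Aᵀ·A), then for all i, o ∈ S and all t ≥ 0, |(e^{tA})_{oi}| ≤ 1. -/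
open Matrix NormedSpace

/-! Write `D = diag c̄` and `M = N diag(k) Nᵀ`, so that `D (-A) = M` is symmetric positive
semidefinite. The diagonal entries of `A Aᵀ = Aᵀ A` say that `c̄⁻²` is harmonic for the symmetric
nonnegative weights `(D A)²`, so `c̄` is constant along the nonzero entries of `A`. Hence `A` is
symmetric, commutes with `D`, and `-A = D^{-1/2} M D^{-1/2}` is positive semidefinite. Then
`e^{tA} = U diag(e^{-tλ}) Uᵀ` with `λ ≥ 0` and `U` orthogonal, whose entries are bounded by
`∑ⱼ |U o j| |U i j| ≤ 1`. -/

theorem eq_of_forall_sum_mul_sub_eq_zero {ι : Type*} [Fintype ι] {b : ι → ι → ℝ}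
    (hb : ∀ i j, 0 ≤ b i j) (hsymm : ∀ i j, b i j = b j i) {u : ι → ℝ}
    (h : ∀ i, ∑ j, b i j * (u i - u j) = 0) {i j : ι} (hij : b i j ≠ 0) : u i = u j := by
  have hweighted : ∑ i, ∑ j, b i j * (u i - u j) * u i = 0 :=
    Finset.sum_eq_zero fun i _ => by rw [← Finset.sum_mul, h i, zero_mul]
  -- symmetrizing the vanishing sum above gives the Dirichlet energy `∑ b i j (u i - u j)²`
  have henergy : ∑ i, ∑ j, b i j * (u i - u j) ^ 2 = 0 := by
    have hswap : ∑ i, ∑ j, b i j * (u i - u j) * u i = ∑ i, ∑ j, b i j * (u j - u i) * u j := by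
      rw [Finset.sum_comm]
      simp_rw [hsymm]
    calc ∑ i, ∑ j, b i j * (u i - u j) ^ 2
        = ∑ i, ∑ j, (b i j * (u i - u j) * u i + b i j * (u j - u i) * u j) := by
          exact Finset.sum_congr rfl fun i _ => Finset.sum_congr rfl fun j _ => by ring
      _ = 0 := by simp_rw [Finset.sum_add_distrib, ← hswap, hweighted, add_zero]
  have hnonneg : ∀ i j, 0 ≤ b i j * (u i - u j) ^ 2 := fun i j => mul_nonneg (hb i j) (sq_nonneg _)
  have hterm : b i j * (u i - u j) ^ 2 = 0 := by
    have hrows := (Fintype.sum_eq_zero_iff_of_nonneg fun i =>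
      Finset.sum_nonneg fun j _ => hnonneg i j).mp henergy
    exact congrFun ((Fintype.sum_eq_zero_iff_of_nonneg (hnonneg i)).mp (congrFun hrows i)) j
  exact sub_eq_zero.mp (pow_eq_zero_iff two_ne_zero |>.mp ((mul_eq_zero.mp hterm).resolve_left hij))

namespace Matrix

variable {n : Type*} [Fintype n] [DecidableEq n]

theorem isSymm_of_isSymm_diagonal_mul_of_normal {c : n → ℝ} (hc : ∀ i, 0 < c i)
    {A : Matrix n n ℝ} (hDA : (diagonal c * A).IsSymm) (hnormal : A * Aᵀ = Aᵀ * A) :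
    A.IsSymm := by
  set B := diagonal c * A
  have hA : ∀ i j, A i j = B i j / c i := fun i j => by
    simp [B, diagonal_mul, (hc i).ne']
  have hbalance : ∀ i, ∑ j, B i j ^ 2 * ((c i ^ 2)⁻¹ - (c j ^ 2)⁻¹) = 0 := by
    intro i
    have h := congrFun (congrFun hnormal i) i
    simp only [mul_apply, transpose_apply] at h
    rw [← sub_eq_zero, ← Finset.sum_sub_distrib] at h
    rw [← h]
    refine Finset.sum_congr rfl fun j _ => ?_
    rw [hA i j, hA j i, hDA.apply i j]
    field_simp
  have hc_eq : ∀ i j, B i j ≠ 0 → c i = c j := by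
    intro i j hij
    have : (c i ^ 2)⁻¹ = (c j ^ 2)⁻¹ :=
      eq_of_forall_sum_mul_sub_eq_zero (fun i j => sq_nonneg (B i j))
        (fun i j => by rw [hDA.apply]) hbalance (pow_ne_zero 2 hij)
    rwa [_root_.inv_inj, sq_eq_sq₀ (hc i).le (hc j).le] at this
  refine IsSymm.ext fun i j => ?_
  rw [hA, hA, hDA.apply i j]
  rcases eq_or_ne (B i j) 0 with hij | hij
  · simp [hij]
  · rw [hc_eq i j hij]

theorem posSemidef_of_posSemidef_diagonal_mul {c : n → ℝ} (hc : ∀ i, 0 < c i)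
    {H : Matrix n n ℝ} (hH : H.IsSymm) (hDH : (diagonal c * H).PosSemidef) : H.PosSemidef := by
  have hcomm : ∀ i j, c i * H i j = c j * H i j := fun i j => by
    have := (isHermitian_iff_isSymm.mp hDH.isHermitian).apply j i
    simpa [diagonal_mul, hH.apply i j] using this
  -- `H` commutes with `diagonal c`, so conjugating by `diagonal c^(-1/2)` undoes the weight
  have hconj : H = diagonal (fun i => (√(c i))⁻¹) * (diagonal c * H) *
      (diagonal (fun i => (√(c i))⁻¹))ᴴ := by
    ext i j
    simp only [diagonal_conjTranspose, mul_diagonal, diagonal_mul, star_trivial]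
    rcases eq_or_ne (H i j) 0 with hij | hij
    · simp [hij]
    · have hcij : c i = c j := mul_right_cancel₀ hij (hcomm i j)
      rw [← hcij]
      have := Real.mul_self_sqrt (hc i).le
      have := Real.sqrt_pos.mpr (hc i)
      field_simp
      linarith
  rw [hconj]
  exact hDH.mul_mul_conjTranspose_same _

theorem abs_mul_diagonal_mul_star_apply_le_one {U : Matrix n n ℝ} (hU : U ∈ unitaryGroup n ℝ)
    {d : n → ℝ} (hd : ∀ k, |d k| ≤ 1) (i j : n) : |(U * diagonal d * star U) i j| ≤ 1 := by
  have hrow : ∀ i, ∑ k, U i k ^ 2 = 1 := fun i => by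
    simpa [mul_apply, sq] using congrFun (congrFun (mem_unitaryGroup_iff.mp hU) i) i
  have hentry : (U * diagonal d * star U) i j = ∑ k, U i k * d k * U j k := by
    rw [mul_apply]
    simp only [mul_diagonal, star_apply, star_trivial]
  calc |(U * diagonal d * star U) i j|
      ≤ ∑ k, |U i k * d k * U j k| := hentry ▸ Finset.abs_sum_le_sum_abs _ _
    _ ≤ ∑ k, (U i k ^ 2 + U j k ^ 2) / 2 := Finset.sum_le_sum fun k _ => by
        rw [abs_mul, abs_mul]
        nlinarith [hd k, abs_nonneg (d k), abs_nonneg (U i k), abs_nonneg (U j k),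
          sq_abs (U i k), sq_abs (U j k), sq_nonneg (|U i k| - |U j k|),
          mul_nonneg (abs_nonneg (U i k)) (abs_nonneg (U j k))]
    _ = 1 := by rw [← Finset.sum_div, Finset.sum_add_distrib, hrow, hrow]; norm_num

theorem PosSemidef.abs_exp_neg_apply_le_one {P : Matrix n n ℝ} (hP : P.PosSemidef) (i j : n) :
    |exp (-P) i j| ≤ 1 := by
  set ev := hP.isHermitian.eigenvalues
  set U : Matrix n n ℝ := (hP.isHermitian.eigenvectorUnitary : Matrix n n ℝ)
  have hU : U ∈ unitaryGroup n ℝ := hP.isHermitian.eigenvectorUnitary.2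
  have hUinv : U⁻¹ = star U := inv_eq_right_inv (mem_unitaryGroup_iff.mp hU)
  have hspec : -P = U * diagonal (fun k => -ev k) * U⁻¹ := by
    conv_lhs => rw [hP.isHermitian.spectral_theorem]
    simp [hUinv, U, ev, ← diagonal_neg]
  have hexp : exp (-P) = U * diagonal (fun k => Real.exp (-ev k)) * star U := by
    have hUunit : IsUnit U :=
      ⟨⟨U, star U, mem_unitaryGroup_iff.mp hU, mem_unitaryGroup_iff'.mp hU⟩, rfl⟩
    rw [hspec, exp_conj _ _ hUunit, exp_diagonal, hUinv]
    simp [Pi.exp_def, Real.exp_eq_exp_ℝ]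
  rw [hexp]
  refine abs_mul_diagonal_mul_star_apply_le_one hU (fun k => ?_) i j
  rw [abs_of_pos (Real.exp_pos _), Real.exp_le_one_iff, neg_nonpos]
  exact hP.eigenvalues_nonneg k

end Matrix

/-- Remark 4.2: upper bound on the Sensitivity for normal systems. If
`A = −diag(c̄)⁻¹ N diag(k) Nᵀ` (with `c̄ > 0`, `k ≥ 0`) is normal, then
`|(e^{tA})_{oi}| ≤ 1` for all `t ≥ 0`. -/
theorem sensitivity_upper_bound_normal
    {S R : Type*} [Fintype S] [Fintype R] [DecidableEq S] [DecidableEq R]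
    (N : Matrix S R ℝ) (cbar : S → ℝ) (k : R → ℝ)
    (hcbar : ∀ s, 0 < cbar s) (hk : ∀ r, 0 ≤ k r)
    (A : Matrix S S ℝ)
    (hA : A = -(Matrix.diagonal (fun s => (cbar s)⁻¹) * N * Matrix.diagonal k * Nᵀ))
    (hnormal : A * Aᵀ = Aᵀ * A) :
    ∀ (i o : S) (t : ℝ), 0 ≤ t → |NormedSpace.exp (t • A) o i| ≤ 1 := by
  intro i o t ht
  have hM : (N * diagonal k * Nᵀ).PosSemidef := by
    simpa using (PosSemidef.diagonal hk).mul_mul_conjTranspose_same N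
  have hDA : diagonal cbar * -A = N * diagonal k * Nᵀ := by
    simp [hA, ← Matrix.mul_assoc, diagonal_mul_diagonal, mul_inv_cancel₀ (hcbar _).ne']
  have hAsymm : A.IsSymm := by
    refine isSymm_of_isSymm_diagonal_mul_of_normal hcbar ?_ hnormal
    rw [← isSymm_neg_iff, ← Matrix.mul_neg, hDA]
    exact isHermitian_iff_isSymm.mp hM.isHermitian
  have hnegA : (-A).PosSemidef :=
    posSemidef_of_posSemidef_diagonal_mul hcbar hAsymm.neg (hDA ▸ hM)
  simpa [smul_neg] using (hnegA.smul ht).abs_exp_neg_apply_le_one o i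
end

section
/- Let S and R be finite sets and let N be a real S×R matrix that is homogeneous of order κ for some positive integer κ, i.e. every column of N has exactly two nonzero entries, one equal to κ and one equal to −κ. Let c̄ ∈ ℝ^S be strictly positive, let k ∈ ℝ^R have nonnegative entries, and let A = −diag(c̄)⁻¹ · N · diag(k) · Nᵀ. Then for all i, o ∈ S and all t ≥ 0, 0 ≤ (e^{tA})_{oi} ≤ 1. (Upper bound on Sensitivity for homogeneous systems: S ≤ 1.) -/
open Matrix NormedSpace

/-- `N` is homogeneous of order `κ`: every column has exactly two nonzero entries, one equal
to `κ` and one equal to `−κ`. -/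
def IsHomogeneous {S R : Type*} (N : Matrix S R ℝ) (κ : ℕ) : Prop :=
  ∀ r : R, ∃ s₁ s₂ : S, s₁ ≠ s₂ ∧ N s₁ r = (κ : ℝ) ∧ N s₂ r = -(κ : ℝ) ∧
    ∀ s : S, s ≠ s₁ → s ≠ s₂ → N s r = 0

/-!
The matrix `t • A` has nonnegative off-diagonal entries, because two distinct species occurring
in a reaction carry stoichiometric coefficients `κ` and `-κ` of opposite sign, and its rows sum
to zero, because every column of `N` does. The exponential of such a matrix is row stochastic:
after adding a multiple of the identity the matrix is entrywise nonnegative, and so is every term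
of its exponential series, while the zero row sums make the exponential fix the all-ones vector.
The entries of a row stochastic matrix lie in `[0, 1]`.
-/

open scoped Nat

namespace Matrix

variable {n : Type*} [Fintype n] [DecidableEq n]

theorem hasSum_exp_series {𝕂 : Type*} [RCLike 𝕂] (B : Matrix n n 𝕂) :
    HasSum (fun k : ℕ => (k !⁻¹ : 𝕂) • B ^ k) (exp B) := by
  open scoped Norms.Operator in exact exp_series_hasSum_exp' B

theorem exp_mulVec_of_mulVec_eq_zero {𝕂 : Type*} [RCLike 𝕂] {B : Matrix n n 𝕂} {v : n → 𝕂}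
    (hB : B *ᵥ v = 0) : exp B *ᵥ v = v := by
  have hpow : ∀ k ≠ 0, B ^ k *ᵥ v = 0 := by
    rintro (_ | k) hk
    · contradiction
    · rw [pow_succ, ← mulVec_mulVec, hB, mulVec_zero]
  have hseries : HasSum (fun k : ℕ => ((k !⁻¹ : 𝕂) • B ^ k) *ᵥ v) (exp B *ᵥ v) :=
    (hasSum_exp_series B).map (mulVec.addMonoidHomLeft v)
      (continuous_id.matrix_mulVec continuous_const)
  have hterm : ∀ k ≠ 0, ((k !⁻¹ : 𝕂) • B ^ k) *ᵥ v = 0 := fun k hk => by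
    rw [smul_mulVec, hpow k hk, smul_zero]
  simpa using hseries.unique (hasSum_single 0 hterm)

theorem exp_apply_nonneg_of_nonneg {B : Matrix n n ℝ} (hB : ∀ i j, 0 ≤ B i j) (i j : n) :
    0 ≤ exp B i j :=
  hasSum_le (fun k => mul_nonneg (by positivity) (pow_apply_nonneg hB k i j)) hasSum_zero
    ((Pi.hasSum.1 ((Pi.hasSum.1 (hasSum_exp_series B)) i)) j)

theorem exp_apply_nonneg_of_offDiag_nonneg {B : Matrix n n ℝ}
    (hB : ∀ i j, i ≠ j → 0 ≤ B i j) (i j : n) : 0 ≤ exp B i j := by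
  set α : ℝ := ∑ l, |B l l|
  have hshift : ∀ i j, 0 ≤ (B + diagonal fun _ => α : Matrix n n ℝ) i j := by
    intro i j
    rcases eq_or_ne i j with rfl | hij
    · have := Finset.single_le_sum (fun l _ => abs_nonneg (B l l)) (Finset.mem_univ i)
      simp only [add_apply, diagonal_apply_eq]
      linarith [neg_abs_le (B i i)]
    · simpa [diagonal_apply_ne _ hij] using hB i j hij
  have hsplit : B = (B + diagonal fun _ => α) + diagonal fun _ => -α := by
    rw [add_assoc, diagonal_add]; simp
  have hcomm : Commute (B + diagonal fun _ => α) (diagonal fun _ => -α) :=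
    (scalar_commute (-α) (Commute.all _) _).symm
  rw [hsplit, exp_add_of_commute _ _ hcomm, exp_diagonal, mul_diagonal, Pi.coe_exp,
    ← Real.exp_eq_exp_ℝ]
  exact mul_nonneg (exp_apply_nonneg_of_nonneg hshift i j) (Real.exp_pos _).le

theorem exp_mem_rowStochastic {B : Matrix n n ℝ} (hoff : ∀ i j, i ≠ j → 0 ≤ B i j)
    (hrow : B *ᵥ 1 = 0) : exp B ∈ rowStochastic ℝ n :=
  ⟨exp_apply_nonneg_of_offDiag_nonneg hoff, exp_mulVec_of_mulVec_eq_zero hrow⟩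

end Matrix

section ReactionNetwork

variable {S R : Type*}

theorem IsHomogeneous.transpose_mulVec_one [Fintype S] {N : Matrix S R ℝ} {κ : ℕ}
    (h : IsHomogeneous N κ) : Nᵀ *ᵥ 1 = 0 := by
  ext r
  obtain ⟨s₁, s₂, hne, h₁, h₂, h₀⟩ := h r
  simp only [mulVec, dotProduct, transpose_apply, Pi.one_apply, mul_one, Pi.zero_apply]
  rw [Fintype.sum_eq_add s₁ s₂ hne fun s hs => h₀ s hs.1 hs.2, h₁, h₂, add_neg_cancel]

theorem IsHomogeneous.mul_nonpos_of_ne {N : Matrix S R ℝ} {κ : ℕ} (h : IsHomogeneous N κ)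
    (r : R) {s s' : S} (hss' : s ≠ s') : N s r * N s' r ≤ 0 := by
  obtain ⟨s₁, s₂, hne, h₁, h₂, h₀⟩ := h r
  have hsupp : ∀ x, N x r ≠ 0 → x = s₁ ∨ x = s₂ := fun x hx => by
    by_contra! hx'
    exact hx (h₀ x hx'.1 hx'.2)
  by_cases hs : N s r = 0
  · rw [hs, zero_mul]
  by_cases hs' : N s' r = 0
  · rw [hs', mul_zero]
  have hκ : (0 : ℝ) ≤ κ * κ := mul_self_nonneg _
  rcases hsupp s hs with rfl | rfl <;> rcases hsupp s' hs' with rfl | rfl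
  · exact absurd rfl hss'
  · rw [h₁, h₂]; linarith
  · rw [h₁, h₂]; linarith
  · exact absurd rfl hss'

variable [Fintype S] [Fintype R] [DecidableEq S] [DecidableEq R]

noncomputable def linearizedReactionMatrix (N : Matrix S R ℝ) (cbar : S → ℝ) (k : R → ℝ) :
    Matrix S S ℝ :=
  -(diagonal (fun s => (cbar s)⁻¹) * N * diagonal k * Nᵀ)

theorem linearizedReactionMatrix_apply (N : Matrix S R ℝ) (cbar : S → ℝ) (k : R → ℝ)
    (s s' : S) :
    linearizedReactionMatrix N cbar k s s' = -∑ r, (cbar s)⁻¹ * k r * (N s r * N s' r) := by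
  rw [linearizedReactionMatrix, neg_apply, neg_inj, mul_apply]
  refine Finset.sum_congr rfl fun r _ => ?_
  rw [mul_diagonal, diagonal_mul, transpose_apply]
  ring

theorem linearizedReactionMatrix_apply_nonneg {N : Matrix S R ℝ} {cbar : S → ℝ} {k : R → ℝ}
    {s s' : S} (hcbar : 0 ≤ cbar s) (hk : ∀ r, 0 ≤ k r) (hN : ∀ r, N s r * N s' r ≤ 0) :
    0 ≤ linearizedReactionMatrix N cbar k s s' := by
  rw [linearizedReactionMatrix_apply, neg_nonneg]
  exact Finset.sum_nonpos fun r _ =>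
    mul_nonpos_of_nonneg_of_nonpos (mul_nonneg (inv_nonneg.2 hcbar) (hk r)) (hN r)

theorem linearizedReactionMatrix_mulVec_one {N : Matrix S R ℝ} (hN : Nᵀ *ᵥ 1 = 0)
    (cbar : S → ℝ) (k : R → ℝ) : linearizedReactionMatrix N cbar k *ᵥ 1 = 0 := by
  rw [linearizedReactionMatrix, neg_mulVec, ← mulVec_mulVec, hN, mulVec_zero, neg_zero]

end ReactionNetwork

theorem sensitivity_upper_bound_homogeneous_general
    {S R : Type*} [Fintype S] [Fintype R] [DecidableEq S] [DecidableEq R]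
    (N : Matrix S R ℝ) (κ : ℕ) (hhom : IsHomogeneous N κ)
    (cbar : S → ℝ) (k : R → ℝ)
    (hcbar : ∀ s, 0 < cbar s) (hk : ∀ r, 0 ≤ k r)
    (A : Matrix S S ℝ)
    (hA : A = -(Matrix.diagonal (fun s => (cbar s)⁻¹) * N * Matrix.diagonal k * Nᵀ)) :
    ∀ (i o : S) (t : ℝ), 0 ≤ t →
      0 ≤ exp (t • A) o i ∧ exp (t • A) o i ≤ 1 := by
  intro i o t ht
  change A = linearizedReactionMatrix N cbar k at hA
  have hoff : ∀ s s', s ≠ s' → 0 ≤ (t • A) s s' := fun s s' hss' =>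
    mul_nonneg ht (hA ▸ linearizedReactionMatrix_apply_nonneg (hcbar s).le hk
      fun r => hhom.mul_nonpos_of_ne r hss')
  have hrow : (t • A) *ᵥ 1 = 0 := by
    rw [smul_mulVec, hA, linearizedReactionMatrix_mulVec_one hhom.transpose_mulVec_one, smul_zero]
  have hstoch := exp_mem_rowStochastic hoff hrow
  exact ⟨nonneg_of_mem_rowStochastic hstoch, le_one_of_mem_rowStochastic hstoch⟩

/-- Theorem 4.3 (`thm:SensitivityUpBoundHomogenous`): upper bound on the Sensitivity for
homogeneous systems. If `N` is homogeneous of some order `κ > 0`, `c̄ > 0`, `k ≥ 0`, then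
`0 ≤ (e^{tA})_{oi} ≤ 1` for all `t ≥ 0`; in particular `S ≤ 1`. -/
theorem sensitivity_upper_bound_homogeneous
    {S R : Type*} [Fintype S] [Fintype R] [DecidableEq S] [DecidableEq R]
    (N : Matrix S R ℝ) (κ : ℕ) (hκ : 0 < κ) (hhom : IsHomogeneous N κ)
    (cbar : S → ℝ) (k : R → ℝ)
    (hcbar : ∀ s, 0 < cbar s) (hk : ∀ r, 0 ≤ k r)
    (A : Matrix S S ℝ)
    (hA : A = -(Matrix.diagonal (fun s => (cbar s)⁻¹) * N * Matrix.diagonal k * Nᵀ)) :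
    ∀ (i o : S) (t : ℝ), 0 ≤ t →
      0 ≤ exp (t • A) o i ∧ exp (t • A) o i ≤ 1 :=
  sensitivity_upper_bound_homogeneous_general N κ hhom cbar k hcbar hk A hA
end

section
/- Let S and R be finite sets, N a real S×R matrix, and fix i, o ∈ S and a subset R₁ ⊆ R. For strictly positive c̄ ∈ ℝ^S and nonnegative k ∈ ℝ^R write A(c̄,k) = −diag(c̄)⁻¹ · N · diag(k) · Nᵀ. Then for every strictly positive c̄ ∈ ℝ^S, every nonnegative k ∈ ℝ^R with k_r = 0 for all r ∉ R₁, every t ≥ 0, and every ε > 0, there exist a strictly positive c̄' ∈ ℝ^S, a strictly positive k' ∈ ℝ^R, and t' ≥ 0 such that (e^{t'A(c̄',k')})_{oi} > (e^{tA(c̄,k)})_{oi} − ε. (The maximal Sensitivity of a subsystem is at most the maximal Sensitivity of the full system.) -/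
open Matrix NormedSpace

/-- The linearized reaction matrix `A(c̄,k) = −diag(c̄)⁻¹ N diag(k) Nᵀ`. -/
noncomputable def linMatrix {S R : Type*} [Fintype S] [Fintype R] [DecidableEq S]
    [DecidableEq R] (N : Matrix S R ℝ) (c : S → ℝ) (k : R → ℝ) : Matrix S S ℝ :=
  -(Matrix.diagonal (fun s => (c s)⁻¹) * N * Matrix.diagonal k * Nᵀ)

/-! The matrix exponential depends continuously on the rates `k`, so a subsystem's value
`(e^{tA(c̄,k)})_{oi}` is the limit of the values at the strictly positive rates `k + δ` as
`δ → 0⁺`; keeping `c̄` and `t`, some small `δ > 0` comes within `ε`. -/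

theorem Matrix.continuous_exp {n : Type*} [Fintype n] [DecidableEq n] :
    Continuous (exp : Matrix n n ℝ → Matrix n n ℝ) :=
  open scoped Norms.Operator in exp_continuous

section LinMatrix

variable {S R : Type*} [Fintype S] [Fintype R] [DecidableEq S] [DecidableEq R]

theorem continuous_linMatrix (N : Matrix S R ℝ) (c : S → ℝ) :
    Continuous (linMatrix N c) :=
  ((continuous_const.matrix_mul continuous_id.matrix_diagonal).matrix_mul continuous_const).neg

theorem continuous_exp_smul_linMatrix_apply (N : Matrix S R ℝ) (c : S → ℝ) (t : ℝ) (o i : S) :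
    Continuous fun k => exp (t • linMatrix N c k) o i :=
  (Matrix.continuous_exp.comp ((continuous_linMatrix N c).const_smul t)).matrix_elem o i

end LinMatrix

theorem maxSensitivity_subsystem_le_general
    {S R : Type*} [Fintype S] [Fintype R] [DecidableEq S] [DecidableEq R]
    (N : Matrix S R ℝ) (i o : S)
    (cbar : S → ℝ) (hcbar : ∀ s, 0 < cbar s)
    (k : R → ℝ) (hk : ∀ r, 0 ≤ k r)
    (t : ℝ) (ht : 0 ≤ t) (ε : ℝ) (hε : 0 < ε) :
    ∃ (cbar' : S → ℝ) (k' : R → ℝ) (t' : ℝ),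
      (∀ s, 0 < cbar' s) ∧ (∀ r, 0 < k' r) ∧ 0 ≤ t' ∧
      exp (t' • linMatrix N cbar' k') o i >
        exp (t • linMatrix N cbar k) o i - ε := by
  set g : ℝ → ℝ := fun δ => exp (t • linMatrix N cbar (fun r => k r + δ)) o i
  have hg : Continuous g :=
    (continuous_exp_smul_linMatrix_apply N cbar t o i).comp
      (continuous_pi fun _ => continuous_const.add continuous_id)
  have hg0 : g 0 = exp (t • linMatrix N cbar k) o i := by simp [g]
  have hclose : ∀ᶠ δ in nhdsWithin 0 (Set.Ioi 0), g 0 - ε < g δ :=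
    (hg.tendsto 0).mono_left nhdsWithin_le_nhds |>.eventually_const_lt (by linarith)
  obtain ⟨δ, hgδ, hδ : 0 < δ⟩ := (hclose.and self_mem_nhdsWithin).exists
  refine ⟨cbar, fun r => k r + δ, t, hcbar, fun r => ?_, ht, hg0 ▸ hgδ⟩
  exact add_pos_of_nonneg_of_pos (hk r) hδ

/-- Theorem 4.5 (`th:PSsubsystems`), Sensitivity part: the maximal Sensitivity of a subsystem
(obtained by setting `k_r = 0` for `r ∉ R₁`) is at most the maximal Sensitivity of the full
system: any value `(e^{tA(c̄,k)})_{oi}` attained with subsystem rates can be approximated to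
within `ε` by `(e^{t'A(c̄',k')})_{oi}` with strictly positive rates `k'`. -/
theorem maxSensitivity_subsystem_le
    {S R : Type*} [Fintype S] [Fintype R] [DecidableEq S] [DecidableEq R]
    (N : Matrix S R ℝ) (i o : S) (R₁ : Set R)
    (cbar : S → ℝ) (hcbar : ∀ s, 0 < cbar s)
    (k : R → ℝ) (hk : ∀ r, 0 ≤ k r) (hk0 : ∀ r ∉ R₁, k r = 0)
    (t : ℝ) (ht : 0 ≤ t) (ε : ℝ) (hε : 0 < ε) :
    ∃ (cbar' : S → ℝ) (k' : R → ℝ) (t' : ℝ),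
      (∀ s, 0 < cbar' s) ∧ (∀ r, 0 < k' r) ∧ 0 ≤ t' ∧
      exp (t' • linMatrix N cbar' k') o i >
        exp (t • linMatrix N cbar k) o i - ε :=
  maxSensitivity_subsystem_le_general N i o cbar hcbar k hk t ht ε hε
end

section
/- Let S be a finite set, let k : S × S → ℝ be nonnegative with k(s,s) = 0 for all s, and let c̄ ∈ ℝ^S be strictly positive satisfying the stationarity condition Σ_{ℓ∈S} k(s,ℓ)·c̄_ℓ = (Σ_{ℓ∈S} k(ℓ,s))·c̄_s for every s ∈ S. Define the S×S matrix Â by Â_{ss'} = (c̄_{s'}/c̄_s)·k(s,s') for s ≠ s' and Â_{ss} = −Σ_{ℓ∈S} k(ℓ,s). Then for all i, o ∈ S and all t ≥ 0, 0 ≤ (e^{tÂ})_{oi} ≤ 1. (In a reversible unimolecular reaction network, not necessarily satisfying detailed balance, the Sensitivity satisfies S ≤ 1.) -/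
/-! Off the diagonal `Â` is nonnegative, and stationarity of `c̄` says exactly that the rows of
`Â` sum to zero. Adding a multiple of the identity to `tÂ` gives a nonnegative matrix, whose
exponential series has nonnegative terms, so `e^{tÂ}` is entrywise nonnegative; and `e^{tÂ}` fixes
the all-ones vector. A nonnegative matrix with unit row sums has all entries in `[0, 1]`. -/

open Matrix NormedSpace
open scoped Nat

theorem NormedSpace.exp_mul_eq_self_of_mul_eq_zero {𝔸 : Type*} [NormedRing 𝔸]
    [NormedAlgebra ℚ 𝔸] [CompleteSpace 𝔸] {x y : 𝔸} (h : x * y = 0) : exp x * y = y := by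
  have hterm : ∀ n : ℕ, ((n !⁻¹ : ℚ) • x ^ n) * y = if n = 0 then y else 0 := by
    rintro (_ | n)
    · simp
    · rw [smul_mul_assoc, pow_succ, mul_assoc, h, mul_zero, smul_zero, if_neg n.succ_ne_zero]
  have hsum := (exp_series_hasSum_exp' (𝕂 := ℚ) x).mul_right y
  simp only [hterm] at hsum
  exact hsum.unique (hasSum_ite_eq 0 y)

namespace Matrix

variable {m : Type*} [Fintype m] [DecidableEq m]

theorem exp_mulVec_eq_self_of_mulVec_eq_zero {𝕜 : Type*} [RCLike 𝕜] {A : Matrix m m 𝕜}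
    {v : m → 𝕜} (h : A *ᵥ v = 0) : exp A *ᵥ v = v := by
  have hcol : A * replicateCol m v = 0 := by
    rw [← replicateCol_mulVec, h]
    rfl
  have hexp := open scoped Norms.Operator in exp_mul_eq_self_of_mul_eq_zero hcol
  rw [← replicateCol_mulVec] at hexp
  exact funext fun i => congrFun (congrFun hexp i) i

theorem exp_apply_nonneg_of_nonneg_s15 {A : Matrix m m ℝ} (hA : ∀ i j, 0 ≤ A i j) (i j : m) :
    0 ≤ exp A i j := by
  have hsum := open scoped Norms.Operator in exp_series_hasSum_exp' (𝕂 := ℝ) A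
  refine HasSum.nonneg (fun n => ?_) (Pi.hasSum.mp (Pi.hasSum.mp hsum i) j)
  exact mul_nonneg (by positivity) (pow_apply_nonneg hA n i j)

theorem exp_add_smul_one (A : Matrix m m ℝ) (c : ℝ) :
    exp (A + c • (1 : Matrix m m ℝ)) = Real.exp c • exp A := by
  rw [exp_add_of_commute _ _ ((Commute.one_right A).smul_right c), smul_one_eq_diagonal,
    exp_diagonal, Pi.exp_def, ← Real.exp_eq_exp_ℝ, ← smul_one_eq_diagonal, mul_smul_comm,
    mul_one]

theorem exp_apply_nonneg_of_offDiag_nonneg_s15 {A : Matrix m m ℝ}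
    (hA : ∀ i j, i ≠ j → 0 ≤ A i j) (i j : m) : 0 ≤ exp A i j := by
  set c := ∑ s, |A s s|
  have hshift : ∀ i j, 0 ≤ (A + c • (1 : Matrix m m ℝ)) i j := by
    intro i j
    rcases eq_or_ne i j with rfl | hij
    · have : |A i i| ≤ c := Finset.single_le_sum (f := fun s => |A s s|)
        (fun s _ => abs_nonneg _) (Finset.mem_univ i)
      simp only [add_apply, smul_apply, one_apply_eq, smul_eq_mul, mul_one]
      linarith [neg_abs_le (A i i)]
    · simpa [one_apply_ne hij] using hA i j hij
  have hexp := exp_apply_nonneg_of_nonneg_s15 hshift i j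
  rw [exp_add_smul_one, smul_apply, smul_eq_mul] at hexp
  exact (mul_nonneg_iff_of_pos_left (Real.exp_pos c)).mp hexp

theorem exp_apply_le_one_of_offDiag_nonneg {A : Matrix m m ℝ}
    (hA : ∀ i j, i ≠ j → 0 ≤ A i j) (hrow : A *ᵥ 1 = 0) (i j : m) : exp A i j ≤ 1 :=
  calc exp A i j ≤ ∑ l, exp A i l :=
        Finset.single_le_sum (fun l _ => exp_apply_nonneg_of_offDiag_nonneg_s15 hA i l)
          (Finset.mem_univ j)
    _ = 1 := by
      simpa [mulVec, dotProduct] using congrFun (exp_mulVec_eq_self_of_mulVec_eq_zero hrow) i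

end Matrix

section Linearization

variable {S : Type*} [Fintype S] [DecidableEq S]

noncomputable def unimolecularLinearization (k : S → S → ℝ) (cbar : S → ℝ) : Matrix S S ℝ :=
  of fun s s' => if s = s' then -(∑ ℓ, k ℓ s) else (cbar s' / cbar s) * k s s'

variable {k : S → S → ℝ} {cbar : S → ℝ}

theorem unimolecularLinearization_apply_nonneg (hk : ∀ s s', 0 ≤ k s s')
    (hcbar : ∀ s, 0 < cbar s) {s s' : S} (h : s ≠ s') :
    0 ≤ unimolecularLinearization k cbar s s' := by
  rw [unimolecularLinearization, of_apply, if_neg h]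
  exact mul_nonneg (div_nonneg (hcbar s').le (hcbar s).le) (hk s s')

theorem unimolecularLinearization_mulVec_one (hkd : ∀ s, k s s = 0) (hcbar : ∀ s, 0 < cbar s)
    (hstat : ∀ s, ∑ ℓ, k s ℓ * cbar ℓ = (∑ ℓ, k ℓ s) * cbar s) :
    unimolecularLinearization k cbar *ᵥ 1 = 0 := by
  ext s
  have hentry : ∀ s', unimolecularLinearization k cbar s s' =
      cbar s' / cbar s * k s s' - if s = s' then ∑ ℓ, k ℓ s else 0 := by
    intro s'
    rw [unimolecularLinearization, of_apply]
    split_ifs with h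
    · simp [h, hkd]
    · simp
  have hinflow : ∑ s', cbar s' / cbar s * k s s' = ∑ ℓ, k ℓ s := by
    rw [← mul_div_cancel_right₀ (∑ ℓ, k ℓ s) (hcbar s).ne', ← hstat, Finset.sum_div]
    exact Finset.sum_congr rfl fun s' _ => by ring
  simp only [mulVec, dotProduct, Pi.one_apply, mul_one, hentry, Finset.sum_sub_distrib,
    Finset.sum_ite_eq, Finset.mem_univ, if_true, hinflow, sub_self, Pi.zero_apply]

end Linearization

/-- Theorem 6.2 (`th:upper-bound-sensitivity-dissipative`): in a reversible unimolecular
reaction network, not necessarily satisfying detailed balance, the Sensitivity is at most 1: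
for the linearization `Â` around a steady state `c̄` we have `0 ≤ (e^{tÂ})_{oi} ≤ 1`. -/
theorem sensitivity_le_one_unimolecular
    {S : Type*} [Fintype S] [DecidableEq S]
    (k : S → S → ℝ) (hk : ∀ s s', 0 ≤ k s s') (hkd : ∀ s, k s s = 0)
    (cbar : S → ℝ) (hcbar : ∀ s, 0 < cbar s)
    (hstat : ∀ s, ∑ ℓ, k s ℓ * cbar ℓ = (∑ ℓ, k ℓ s) * cbar s)
    (Ahat : Matrix S S ℝ)
    (hA : ∀ s s', Ahat s s' =
      if s = s' then -(∑ ℓ, k ℓ s) else (cbar s' / cbar s) * k s s') :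
    ∀ (i o : S) (t : ℝ), 0 ≤ t →
      0 ≤ exp (t • Ahat) o i ∧ exp (t • Ahat) o i ≤ 1 := by
  intro i o t ht
  obtain rfl : Ahat = unimolecularLinearization k cbar := Matrix.ext hA
  have hoffDiag : ∀ s s', s ≠ s' → 0 ≤ (t • unimolecularLinearization k cbar) s s' :=
    fun s s' h => mul_nonneg ht (unimolecularLinearization_apply_nonneg hk hcbar h)
  have hrow : (t • unimolecularLinearization k cbar) *ᵥ 1 = 0 := by
    rw [smul_mulVec, unimolecularLinearization_mulVec_one hkd hcbar hstat, smul_zero]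
  exact ⟨exp_apply_nonneg_of_offDiag_nonneg_s15 hoffDiag o i,
    exp_apply_le_one_of_offDiag_nonneg hoffDiag hrow o i⟩
end
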